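/- Let ψ : Λ → Λ' be a homomorphism of ℤ-modules with ker(ψ) = ℤ·S, where the symmetric bilinear form on Λ satisfies S.S = -2. Let τ' : Λ' → Λ' and σ : Λ → Λ be form-preserving homomorphisms with ψ∘σ = τ'∘ψ. If D ∈ Λ satisfies τ'(ψ(D)) = -ψ(D) and σ preserves the bilinear form (σ(x).σ(y) = x.y), then σ(D) = -D or σ(D) = -(D + (D.S)S). -/

import Mathlib

/-!
Since `ψ (σ D + D) = τ' (ψ D) + ψ D = 0`, we can write `σ D = -(D + c S)` for some `c ∈ ℤ`.
As `σ` is an isometry, `(D + c S)² = D²`, which with `S² = -2` reads `2c (D.S - c) = 0`.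
-/

theorem LinearMap.exists_eq_neg_add_smul_of_ker_eq_span {R M N : Type*} [CommRing R]
    [AddCommGroup M] [Module R M] [AddCommGroup N] [Module R N]
    (ψ : M →ₗ[R] N) {S : M} (hker : LinearMap.ker ψ = Submodule.span R {S})
    (σ : M →ₗ[R] M) (τ : N →ₗ[R] N) (hcomm : ∀ x, ψ (σ x) = τ (ψ x))
    {D : M} (hD : τ (ψ D) = -ψ D) : ∃ c : R, σ D = -(D + c • S) := by
  have hmem : σ D + D ∈ Submodule.span R {S} := by
    rw [← hker, LinearMap.mem_ker, map_add, hcomm, hD, neg_add_cancel]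
  obtain ⟨n, hn⟩ := Submodule.mem_span_singleton.mp hmem
  refine ⟨-n, ?_⟩
  rw [neg_smul, hn]
  abel

theorem eq_zero_or_eq_of_apply_add_smul_self_eq {R M : Type*} [CommRing R] [NoZeroDivisors R]
    [NeZero (2 : R)] [AddCommGroup M] [Module R M]
    (B : M →ₗ[R] M →ₗ[R] R) (hsymm : ∀ x y, B x y = B y x) {S : M} (hS : B S S = -2)
    (D : M) (c : R) (h : B (D + c • S) (D + c • S) = B D D) : c = 0 ∨ c = B D S := by
  have hexpand : B (D + c • S) (D + c • S) = B D D + 2 * c * (B D S - c) := by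
    simp only [map_add, map_smul, LinearMap.add_apply, LinearMap.smul_apply, smul_eq_mul, hS,
      hsymm S D]
    ring
  have h2c : (2 * c) * (B D S - c) = 0 := by linear_combination hexpand.symm.trans h
  rcases mul_eq_zero.mp h2c with hc | hc
  · exact .inl ((mul_eq_zero.mp hc).resolve_left two_ne_zero)
  · exact .inr (sub_eq_zero.mp hc).symm

/-- If `σ` is an isometry of `Λ` compatible via `ψ` with an involution `τ'`
on `Λ'`, `ker ψ = ℤ·S` with `S.S = -2`, and `ψ D` is `τ'`-anti-invariant,
then `σ D = -D` or `σ D = -(D + (D.S)S)`. -/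
theorem anti_invariant_dichotomy {Λ Λ' : Type*} [AddCommGroup Λ] [Module ℤ Λ]
    [AddCommGroup Λ'] [Module ℤ Λ']
    (B : Λ →ₗ[ℤ] Λ →ₗ[ℤ] ℤ) (hsymm : ∀ x y, B x y = B y x)
    (ψ : Λ →ₗ[ℤ] Λ') (S : Λ)
    (hker : LinearMap.ker ψ = Submodule.span ℤ {S}) (hS : B S S = -2)
    (σ : Λ →ₗ[ℤ] Λ) (τ' : Λ' →ₗ[ℤ] Λ')
    (hcomm : ∀ x, ψ (σ x) = τ' (ψ x))
    (hiso : ∀ x y, B (σ x) (σ y) = B x y)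
    (D : Λ) (hD : τ' (ψ D) = -ψ D) :
    σ D = -D ∨ σ D = -(D + B D S • S) := by
  obtain ⟨c, hc⟩ := ψ.exists_eq_neg_add_smul_of_ker_eq_span hker σ τ' hcomm hD
  have hnorm := hiso D D
  simp only [hc, map_neg, LinearMap.neg_apply, neg_neg] at hnorm
  -- the `•` of the statement is `zsmul`, while `hc` uses the instance `Module ℤ Λ`
  rw [hc, ← int_smul_eq_zsmul ‹Module ℤ Λ›]
  rcases eq_zero_or_eq_of_apply_add_smul_self_eq B hsymm hS D c hnorm with rfl | rfl
  · exact .inl (by rw [Module.zero_smul, add_zero])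
  · exact .inr rfl
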